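/- arXiv:1903.04696 — 2 statements merged into one kernel-verified Lean document; each statement's English description precedes it below -/
import Mathlib

section
/- Let α, β ∈ Γ with α_k = β_k < ∞ for some k ∈ I. Then there exists γ = (γ_1,…,γ_r) ∈ Γ such that γ_i ≥ min{α_i, β_i} for all i ∈ I, γ_i = min{α_i, β_i} whenever α_i ≠ β_i, and γ_k > α_k = β_k. -/
/-!
Take `f, g ∈ O` with `v(f) = α`, `v(g) = β`. Since `O` is a `K`-vector space, `f + c • g ∈ O`
for every `c ∈ K`. Choosing `c ≠ 0` to cancel the leading coefficients of `f_k` and `g_k`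
raises the order at `k`, while a nonzero scalar does not change the order of any `g_i`, so at
every other branch the usual ultrametric behaviour of the order gives the remaining claims.
-/

noncomputable section
open PowerSeries

/-- Coefficient-wise definition of the continuous substitution homomorphism
`X_j ↦ x j` from multivariate power series to power series (each `x j` having
zero constant coefficient). -/
def psiFun {K : Type*} [CommRing K] {n : ℕ} (x : Fin n → PowerSeries K)
    (F : MvPowerSeries (Fin n) K) : PowerSeries K :=
  PowerSeries.mk fun m =>
    PowerSeries.coeff m (∑ e : Fin n → Fin (m + 1),
      MvPowerSeries.coeff (Finsupp.equivFunOnFinite.symm fun j => (e j : ℕ)) F •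
        ∏ j, x j ^ ((e j : ℕ)))

/-- The data of an `n`-space algebroid curve with `r` branches. -/
structure CurveData (K : Type*) [Field K] (r n : ℕ) where
  x : Fin n → Fin r → PowerSeries K
  const_coeff_zero : ∀ j i, PowerSeries.constantCoeff (x j i) = 0
  primes_distinct : ∀ i i' : Fin r, i ≠ i' →
    {F : MvPowerSeries (Fin n) K | psiFun (fun j => x j i) F = 0} ≠
      {F : MvPowerSeries (Fin n) K | psiFun (fun j => x j i') F = 0}

variable {K : Type*} [Field K] {r n : ℕ}

/-- The substitution homomorphism `ψ` with values in `R = ⊕ K[[t_i]]`. -/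
def CurveData.psiP (D : CurveData K r n) (F : MvPowerSeries (Fin n) K) :
    Fin r → PowerSeries K :=
  fun i => psiFun (fun j => D.x j i) F

/-- The local ring `O = Im ψ` of the curve. -/
def CurveData.OP (D : CurveData K r n) : Set (Fin r → PowerSeries K) :=
  Set.range D.psiP

/-- The value vector `v(g) = (v_1(g_1), …, v_r(g_r))` of orders. -/
def vvP {K : Type*} [Semiring K] {r : ℕ} (g : Fin r → PowerSeries K) : Fin r → ℕ∞ :=
  fun i => (g i).order

/-- The semiring of values `Γ = v(O)` of the curve. -/
def CurveData.GammaP (D : CurveData K r n) : Set (Fin r → ℕ∞) := vvP '' D.OP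

lemma psiFun_add_smul {R : Type*} [CommRing R] {n : ℕ} (x : Fin n → PowerSeries R)
    (F G : MvPowerSeries (Fin n) R) (c : R) :
    psiFun x (F + c • G) = psiFun x F + c • psiFun x G := by
  ext m
  simp only [psiFun, coeff_mk, map_add, MvPowerSeries.coeff_smul, add_smul, mul_smul,
    Finset.sum_add_distrib, ← Finset.smul_sum, coeff_smul, smul_eq_mul]

lemma CurveData.add_smul_mem_OP (D : CurveData K r n)
    {f g : Fin r → PowerSeries K} (hf : f ∈ D.OP) (hg : g ∈ D.OP) (c : K) :
    f + c • g ∈ D.OP := by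
  obtain ⟨F, rfl⟩ := hf
  obtain ⟨G, rfl⟩ := hg
  exact ⟨F + c • G, funext fun i => psiFun_add_smul _ F G c⟩

namespace PowerSeries

variable {R : Type*} [DivisionRing R] {c : R}

lemma order_smul_of_ne_zero (hc : c ≠ 0) (φ : R⟦X⟧) : (c • φ).order = φ.order := by
  refine le_antisymm ?_ le_order_smul
  simpa only [smul_smul, inv_mul_cancel₀ hc, one_smul] using
    le_order_smul (φ := c • φ) (a := c⁻¹)

lemma min_order_le_order_add_smul (hc : c ≠ 0) (φ ψ : R⟦X⟧) :
    min φ.order ψ.order ≤ (φ + c • ψ).order := by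
  simpa only [order_smul_of_ne_zero hc] using min_order_le_order_add φ (c • ψ)

lemma order_add_smul_of_order_ne (hc : c ≠ 0) {φ ψ : R⟦X⟧} (h : φ.order ≠ ψ.order) :
    (φ + c • ψ).order = min φ.order ψ.order := by
  rw [order_add_of_order_ne φ (c • ψ) (by rwa [order_smul_of_ne_zero hc]),
    order_smul_of_ne_zero hc]

lemma exists_order_lt_order_add_smul {φ ψ : R⟦X⟧} (h : φ.order = ψ.order)
    (hfin : φ.order ≠ ⊤) : ∃ c : R, c ≠ 0 ∧ φ.order < (φ + c • ψ).order := by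
  obtain ⟨d, hd⟩ := ENat.ne_top_iff_exists.mp hfin
  obtain ⟨ha, hφ⟩ := order_eq_nat.mp hd.symm
  obtain ⟨hb, hψ⟩ := order_eq_nat.mp (h ▸ hd.symm)
  set c := -(coeff d φ * (coeff d ψ)⁻¹)
  have hcancel : ∀ i < d + 1, coeff i (φ + c • ψ) = 0 := fun i hi => by
    rw [map_add, coeff_smul, smul_eq_mul]
    rcases (Nat.lt_succ_iff.mp hi).lt_or_eq with hlt | rfl
    · rw [hφ i hlt, hψ i hlt, mul_zero, add_zero]
    · rw [neg_mul, inv_mul_cancel_right₀ hb, add_neg_cancel]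
  refine ⟨c, neg_ne_zero.mpr (mul_ne_zero ha (inv_ne_zero hb)), ?_⟩
  calc φ.order = d := hd.symm
    _ < (d + 1 : ℕ) := by exact_mod_cast Nat.lt_succ_self d
    _ ≤ (φ + c • ψ).order := nat_le_order _ _ hcancel

end PowerSeries

theorem statement1_general {K : Type*} [Field K] {r n : ℕ}
    (D : CurveData K r n) (α β : Fin r → ℕ∞) (hα : α ∈ D.GammaP) (hβ : β ∈ D.GammaP)
    (k : Fin r) (heq : α k = β k) (hfin : α k ≠ ⊤) :
    ∃ γ ∈ D.GammaP, (∀ i, min (α i) (β i) ≤ γ i) ∧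
      (∀ i, α i ≠ β i → γ i = min (α i) (β i)) ∧ α k < γ k := by
  obtain ⟨f, hf, rfl⟩ := hα
  obtain ⟨g, hg, rfl⟩ := hβ
  obtain ⟨c, hc, hk⟩ := exists_order_lt_order_add_smul heq hfin
  exact ⟨vvP (f + c • g), ⟨_, D.add_smul_mem_OP hf hg c, rfl⟩,
    fun i => min_order_le_order_add_smul hc (f i) (g i),
    fun i hi => order_add_smul_of_order_ne hc hi, hk⟩

/-- Property P.1. If `α, β ∈ Γ` and `α k = β k < ∞` for some `k`,
then there is `γ ∈ Γ` with `γ i ≥ min (α i) (β i)` for all `i` (with equality whenever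
`α i ≠ β i`) and `γ k > α k = β k`. -/
theorem statement1 {K : Type*} [Field K] [IsAlgClosed K] {r n : ℕ} (hr : 1 ≤ r)
    (D : CurveData K r n) (α β : Fin r → ℕ∞) (hα : α ∈ D.GammaP) (hβ : β ∈ D.GammaP)
    (k : Fin r) (heq : α k = β k) (hfin : α k ≠ ⊤) :
    ∃ γ ∈ D.GammaP, (∀ i, min (α i) (β i) ≤ γ i) ∧
      (∀ i, α i ≠ β i → γ i = min (α i) (β i)) ∧ α k < γ k :=
  statement1_general D α β hα hβ k heq hfin
end
end

section
/- Every fractional ideal I of O admits a Standard Basis: there exist finite sets G ⊆ M∖{0} and H ⊆ I∖{0} such that every nonzero element of I admits a reduction modulo (H,G). -/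
noncomputable section
open PowerSeries

variable {K : Type*} [Field K] {r n : ℕ}

/-- The substitution homomorphism `ψ` with values in the total quotient ring
`⊕ K((t_i))`. -/
def CurveData.psi (D : CurveData K r n) (F : MvPowerSeries (Fin n) K) :
    Fin r → LaurentSeries K :=
  fun i => (psiFun (fun j => D.x j i) F : LaurentSeries K)

/-- The local ring `O` of the curve, viewed inside `⊕ K((t_i))`. -/
def CurveData.O (D : CurveData K r n) : Set (Fin r → LaurentSeries K) :=
  Set.range D.psi

open Classical in
/-- The order valuation on Laurent series, with `v(0) = ∞`. -/
def lOrd {K : Type*} [Field K] (f : LaurentSeries K) : WithTop ℤ :=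
  if f = 0 then ⊤ else (f.order : WithTop ℤ)

/-- The value vector `v(h) = (v_1(h_1), …, v_r(h_r))`. -/
def vv {K : Type*} [Field K] {r : ℕ} (h : Fin r → LaurentSeries K) : Fin r → WithTop ℤ :=
  fun i => lOrd (h i)

/-- The semiring of values `Γ = v(O)`. -/
def CurveData.Gamma (D : CurveData K r n) : Set (Fin r → WithTop ℤ) := vv '' D.O

/-- The maximal ideal `M` of `O` (elements of `O` all of whose components have
positive order). -/
def CurveData.Mset (D : CurveData K r n) : Set (Fin r → LaurentSeries K) :=
  {g | g ∈ D.O ∧ ∀ i, 0 < lOrd (g i)}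

/-- `I` is a fractional ideal of `O`: a finitely generated `O`-submodule of
`⊕ K((t_i))` containing an element all of whose components are nonzero. -/
def CurveData.IsFracIdeal (D : CurveData K r n) (I : Set (Fin r → LaurentSeries K)) : Prop :=
  (∃ B : Finset (Fin r → LaurentSeries K),
    I = {f | ∃ a : (Fin r → LaurentSeries K) → (Fin r → LaurentSeries K),
      (∀ b ∈ B, a b ∈ D.O) ∧ f = ∑ b ∈ B, a b * b}) ∧
  ∃ h ∈ I, ∀ i, h i ≠ 0

/-- A `G`-product `G^α = ∏_{g ∈ G} g^{α_g}`. -/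
def Gprod {K : Type*} [Field K] {r : ℕ} (G : Finset (Fin r → LaurentSeries K))
    (α : (Fin r → LaurentSeries K) → ℕ) : Fin r → LaurentSeries K :=
  ∏ g ∈ G, g ^ α g

/-- `f'` is a `k`-reduction of `f` modulo `(H, G)`. -/
def IsKRed {K : Type*} [Field K] {r : ℕ} (G H : Finset (Fin r → LaurentSeries K)) (k : Fin r)
    (f f' : Fin r → LaurentSeries K) : Prop :=
  lOrd (f k) ≠ ⊤ ∧
  ∃ (c : K) (α : (Fin r → LaurentSeries K) → ℕ) (h : Fin r → LaurentSeries K),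
    h ∈ H ∧ f' = f - c • (Gprod G α * h) ∧
    (∀ i, lOrd (f i) ≤ lOrd (f' i)) ∧ lOrd (f k) < lOrd (f' k)

/-- `f'` is a reduction of `f` modulo `(H, G)`. -/
def IsRed {K : Type*} [Field K] {r : ℕ} (G H : Finset (Fin r → LaurentSeries K))
    (f f' : Fin r → LaurentSeries K) : Prop :=
  ∃ k, IsKRed G H k f f'

/-- `(H, G)` is a Standard Basis for the fractional ideal `I`. -/
def IsSB {K : Type*} [Field K] {r n : ℕ} (D : CurveData K r n)
    (G H : Finset (Fin r → LaurentSeries K)) (I : Set (Fin r → LaurentSeries K)) : Prop :=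
  ↑G ⊆ D.Mset \ {0} ∧ ↑H ⊆ I \ {0} ∧
  ∀ f ∈ I, f ≠ 0 → ∃ f', IsRed G H f f'

/-- `G` is a Standard Basis for the local ring `O`. -/
def IsSBO {K : Type*} [Field K] {r n : ℕ} (D : CurveData K r n)
    (G : Finset (Fin r → LaurentSeries K)) : Prop :=
  IsSB D G {1} D.O

/-- `f` is an `S_k`-process of the pair `(h₁, h₂)` of `H` over `G`. -/
def IsSProc {K : Type*} [Field K] {r : ℕ} (G H : Finset (Fin r → LaurentSeries K)) (k : Fin r)
    (c₁ c₂ : K) (α₁ α₂ : (Fin r → LaurentSeries K) → ℕ)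
    (h₁ h₂ f : Fin r → LaurentSeries K) : Prop :=
  h₁ ∈ H ∧ h₂ ∈ H ∧ f = c₁ • (Gprod G α₁ * h₁) + c₂ • (Gprod G α₂ * h₂) ∧
  min (lOrd ((Gprod G α₁ * h₁) k)) (lOrd ((Gprod G α₂ * h₂) k)) < lOrd (f k)

/-!
Let `f₀ ∈ I` have all components nonzero. Since `O` contains every element of value `≥ σ`,
`I ⊇ O · f₀` contains every element of value `≥ γ := σ + v(f₀)`, in particular the monomials
`t_k^d` (in branch `k`, zero elsewhere) for `d ≥ γ_k`. Take `G = {t_k^(σ_k + 1)}` and put the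
monomials `t_k^(γ_k + s)`, `s ≤ σ_k`, into `H`: a component `f_k ≠ 0` with `v_k(f_k) ≥ γ_k` has
the value of such a monomial times a `G`-product, so its leading term can be cancelled.
Otherwise every finite component of `v(f)` lies in `[m_k, γ_k)`, where `m` bounds the values on
`I` from below (from the finitely many generators), so `v(f)` ranges over a finite set;
one element of `I` for each such value completes `H`, and subtracting a multiple of the one
with value `v(f)` cancels the leading term of any nonzero component of `f`.
-/

lemma lOrd_eq_addVal (f : LaurentSeries K) : lOrd f = HahnSeries.addVal ℤ K f := by
  rw [HahnSeries.addVal_apply, lOrd]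
  split_ifs with hf
  · simp [hf]
  · exact HahnSeries.order_eq_orderTop_of_ne_zero hf

lemma lOrd_eq_top_iff {f : LaurentSeries K} : lOrd f = ⊤ ↔ f = 0 := by
  simp [lOrd]

lemma lOrd_mul (a b : LaurentSeries K) : lOrd (a * b) = lOrd a + lOrd b := by
  simp only [lOrd_eq_addVal, AddValuation.map_mul]

lemma lOrd_single {d : ℤ} {c : K} (hc : c ≠ 0) : lOrd (HahnSeries.single d c) = d := by
  rw [lOrd_eq_addVal, HahnSeries.addVal_apply, HahnSeries.orderTop_single hc]

lemma lOrd_coe_nonneg (p : PowerSeries K) : 0 ≤ lOrd (p : LaurentSeries K) := by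
  rw [lOrd_eq_addVal, HahnSeries.addVal_apply, HahnSeries.le_orderTop_iff_forall]
  intro j hj
  rw [PowerSeries.coeff_coe, if_pos (by exact_mod_cast hj)]

lemma lOrd_le_lOrd_sub_smul {a b : LaurentSeries K} (hab : lOrd a ≤ lOrd b) (c : K) :
    lOrd a ≤ lOrd (a - c • b) := by
  simp only [lOrd_eq_addVal] at hab ⊢
  exact AddValuation.map_le_sub _ le_rfl
    (hab.trans (HahnSeries.orderTop_le_orderTop_smul c b))

lemma exists_lt_lOrd_sub_smul {a b : LaurentSeries K} (ha : a ≠ 0) (hab : lOrd b = lOrd a) :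
    ∃ c : K, lOrd a < lOrd (a - c • b) := by
  simp only [lOrd_eq_addVal, HahnSeries.addVal_apply] at hab ⊢
  have hb : b ≠ 0 := by rintro rfl; simp [eq_comm, ha] at hab
  have hbc : b.leadingCoeff ≠ 0 := HahnSeries.leadingCoeff_ne_zero.mpr hb
  set c := a.leadingCoeff / b.leadingCoeff
  have hc : c ≠ 0 := div_ne_zero (HahnSeries.leadingCoeff_ne_zero.mpr ha) hbc
  have hcb : c • b = HahnSeries.single 0 c * b := by
    rw [← HahnSeries.C_apply, HahnSeries.C_mul_eq_smul]
  have ha' : a.orderTop = a.order := (HahnSeries.order_eq_orderTop_of_ne_zero ha).symm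
  refine ⟨c, ha' ▸ HahnSeries.le_orderTop_of_leadingCoeff_eq ha' ?_ ?_⟩
  · rw [hcb, HahnSeries.orderTop_mul, HahnSeries.orderTop_single hc, WithTop.coe_zero, zero_add,
      hab, ha']
  · rw [hcb, HahnSeries.leadingCoeff_mul, HahnSeries.leadingCoeff_eq (x := HahnSeries.single 0 c),
      HahnSeries.order_single hc, HahnSeries.coeff_single_same, div_mul_cancel₀ _ hbc]

lemma Gprod_zero (G : Finset (Fin r → LaurentSeries K)) : Gprod G 0 = 1 := by
  simp [Gprod]

open Classical in
lemma Gprod_ite_eq {G : Finset (Fin r → LaurentSeries K)} {g : Fin r → LaurentSeries K}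
    (hg : g ∈ G) (m : ℕ) : Gprod G (fun g' => if g' = g then m else 0) = g ^ m :=
  (Finset.prod_eq_single_of_mem g hg fun g' _ hne => by simp [hne]).trans (by simp)

lemma exists_isKRed_of_lOrd_eq_of_le {G H : Finset (Fin r → LaurentSeries K)} {k : Fin r}
    {f h : Fin r → LaurentSeries K} (α : (Fin r → LaurentSeries K) → ℕ) (hH : h ∈ H)
    (hfk : f k ≠ 0) (hk : lOrd ((Gprod G α * h) k) = lOrd (f k))
    (hle : ∀ i, lOrd (f i) ≤ lOrd ((Gprod G α * h) i)) : ∃ f', IsKRed G H k f f' := by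
  obtain ⟨c, hc⟩ := exists_lt_lOrd_sub_smul hfk hk
  exact ⟨_, mt lOrd_eq_top_iff.mp hfk, c, α, h, hH, rfl,
    fun i => lOrd_le_lOrd_sub_smul (hle i) c, hc⟩

lemma exists_isKRed_of_vv_eq {G H : Finset (Fin r → LaurentSeries K)} {k : Fin r}
    {f h : Fin r → LaurentSeries K} (hH : h ∈ H) (hvv : vv h = vv f) (hfk : f k ≠ 0) :
    ∃ f', IsKRed G H k f f' :=
  exists_isKRed_of_lOrd_eq_of_le 0 hH hfk (by rw [Gprod_zero, one_mul]; exact congrFun hvv k)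
    fun i => by rw [Gprod_zero, one_mul]; exact (congrFun hvv i).ge

variable (K) in
def branchMonomial (k : Fin r) (d : ℤ) : Fin r → LaurentSeries K :=
  Pi.single k (HahnSeries.single d 1)

lemma lOrd_branchMonomial_apply (k : Fin r) (d : ℤ) (i : Fin r) :
    lOrd (branchMonomial K k d i) = if i = k then (d : WithTop ℤ) else ⊤ := by
  rcases eq_or_ne i k with rfl | hik
  · simp [branchMonomial, lOrd_single one_ne_zero]
  · simp [branchMonomial, hik, lOrd]

lemma branchMonomial_ne_zero (k : Fin r) (d : ℤ) : branchMonomial K k d ≠ 0 := by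
  simp [branchMonomial]

lemma branchMonomial_pow_mul (k : Fin r) (a b : ℤ) (m : ℕ) :
    branchMonomial K k a ^ m * branchMonomial K k b = branchMonomial K k (m * a + b) := by
  funext i
  rcases eq_or_ne i k with rfl | hik
  · simp [branchMonomial, HahnSeries.single_pow, HahnSeries.single_mul_single]
  · simp [branchMonomial, hik]

lemma exists_isKRed_of_branchMonomial_mem {G H : Finset (Fin r → LaurentSeries K)} {k : Fin r}
    {b : ℕ} {γ : ℤ} (hb : 0 < b) (hG : branchMonomial K k b ∈ G)
    (hH : ∀ s < b, branchMonomial K k (γ + s) ∈ H) {f : Fin r → LaurentSeries K}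
    (hfk : f k ≠ 0) (hγ : (γ : WithTop ℤ) ≤ lOrd (f k)) : ∃ f', IsKRed G H k f f' := by
  classical
  obtain ⟨d, hd⟩ := WithTop.ne_top_iff_exists.mp (mt lOrd_eq_top_iff.mp hfk)
  obtain ⟨n, rfl⟩ : ∃ n : ℕ, d = γ + n :=
    ⟨(d - γ).toNat, by have : γ ≤ d := (by exact_mod_cast hd ▸ hγ); omega⟩
  -- `t^(γ + n) = (t^b)^(n / b) * t^(γ + n % b)`: a `G`-product times an element of `H`
  have hmono : Gprod G (fun g => if g = branchMonomial K k b then n / b else 0) *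
      branchMonomial K k (γ + (n % b : ℕ)) = branchMonomial K k (γ + n) := by
    have hdiv : (b : ℤ) * (n / b : ℕ) + (n % b : ℕ) = n := by
      rw [← Nat.cast_mul, ← Nat.cast_add, Nat.div_add_mod]
    rw [Gprod_ite_eq hG, branchMonomial_pow_mul]
    congr 1
    linarith
  refine exists_isKRed_of_lOrd_eq_of_le (fun g => if g = branchMonomial K k b then n / b else 0)
    (hH _ (Nat.mod_lt n hb)) hfk ?_ fun i => ?_ <;>
    rw [hmono, lOrd_branchMonomial_apply]
  · simp [hd]
  · split_ifs with hik
    · exact (hik ▸ hd).ge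
    · exact le_top

def IsConductorBound (S : Set (Fin r → LaurentSeries K)) (γ : Fin r → ℤ) : Prop :=
  ∀ w : Fin r → LaurentSeries K, (∀ i, (γ i : WithTop ℤ) ≤ lOrd (w i)) → w ∈ S

lemma IsConductorBound.branchMonomial_mem {S : Set (Fin r → LaurentSeries K)} {γ : Fin r → ℤ}
    (hS : IsConductorBound S γ) {k : Fin r} {d : ℤ} (hd : γ k ≤ d) :
    branchMonomial K k d ∈ S :=
  hS _ fun i => by
    rw [lOrd_branchMonomial_apply]
    split_ifs with hik
    · exact_mod_cast hik ▸ hd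
    · exact le_top

variable (K) in
def branchMonomialBlock (b : Fin r → ℕ) (γ : Fin r → ℤ) :
    Finset (Fin r → LaurentSeries K) := by
  classical
  exact Finset.univ.biUnion fun k =>
    (Finset.range (b k)).image fun s : ℕ => branchMonomial K k (γ k + s)

lemma branchMonomial_mem_branchMonomialBlock {b : Fin r → ℕ} {γ : Fin r → ℤ} {k : Fin r}
    {s : ℕ} (hs : s < b k) : branchMonomial K k (γ k + s) ∈ branchMonomialBlock K b γ := by
  classical
  exact Finset.mem_biUnion.mpr
    ⟨k, Finset.mem_univ k, Finset.mem_image_of_mem _ (Finset.mem_range.mpr hs)⟩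

lemma IsConductorBound.coe_branchMonomialBlock_subset {S : Set (Fin r → LaurentSeries K)}
    {γ : Fin r → ℤ} (hS : IsConductorBound S γ) (b : Fin r → ℕ) :
    ↑(branchMonomialBlock K b γ) ⊆ S \ {0} := by
  intro h hh
  simp only [branchMonomialBlock, Finset.coe_biUnion, Finset.coe_image, Set.mem_iUnion,
    Set.mem_image] at hh
  obtain ⟨k, -, s, -, rfl⟩ := hh
  exact ⟨hS.branchMonomial_mem (by simp), branchMonomial_ne_zero k _⟩

lemma CurveData.lOrd_nonneg_of_mem_O {D : CurveData K r n} {g : Fin r → LaurentSeries K}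
    (hg : g ∈ D.O) (i : Fin r) : 0 ≤ lOrd (g i) := by
  obtain ⟨F, rfl⟩ := hg
  exact lOrd_coe_nonneg _

lemma IsConductorBound.mul_mem_O {D : CurveData K r n} {σ : Fin r → ℤ}
    (hσ : IsConductorBound D.O σ) {q g : Fin r → LaurentSeries K}
    (hq : ∀ i, (σ i : WithTop ℤ) ≤ lOrd (q i)) (hg : g ∈ D.O) : q * g ∈ D.O :=
  hσ _ fun i => by
    rw [Pi.mul_apply, lOrd_mul]
    exact le_add_of_le_of_nonneg (hq i) (D.lOrd_nonneg_of_mem_O hg i)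

lemma IsConductorBound.mset {D : CurveData K r n} {σ γ : Fin r → ℤ}
    (hσ : IsConductorBound D.O σ) (hσγ : ∀ i, σ i ≤ γ i) (hγ : ∀ i, 0 < γ i) :
    IsConductorBound D.Mset γ := fun w hw =>
  ⟨hσ w fun i => (WithTop.coe_le_coe.mpr (hσγ i)).trans (hw i),
    fun i => (WithTop.coe_lt_coe.mpr (hγ i)).trans_le (hw i)⟩

namespace CurveData.IsFracIdeal

variable {D : CurveData K r n} {I : Set (Fin r → LaurentSeries K)}

lemma mul_mem (hI : D.IsFracIdeal I) {σ : Fin r → ℤ} (hσ : IsConductorBound D.O σ)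
    {q f : Fin r → LaurentSeries K} (hq : ∀ i, (σ i : WithTop ℤ) ≤ lOrd (q i))
    (hf : f ∈ I) : q * f ∈ I := by
  obtain ⟨⟨B, rfl⟩, -⟩ := hI
  obtain ⟨a, ha, rfl⟩ := hf
  exact ⟨fun b => q * a b, fun b hb => hσ.mul_mem_O hq (ha b hb),
    by simp [Finset.mul_sum, mul_assoc]⟩

lemma exists_isConductorBound (hI : D.IsFracIdeal I) {σ : Fin r → ℤ}
    (hσ : IsConductorBound D.O σ) : ∃ γ : Fin r → ℤ, IsConductorBound I γ := by
  obtain ⟨f₀, hf₀, hf₀0⟩ := hI.2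
  refine ⟨fun i => σ i + (f₀ i).order, fun w hw => ?_⟩
  -- `w / f₀` has value `≥ σ` because `v(w) ≥ σ + v(f₀)`
  have hwf : w = (w * f₀⁻¹) * f₀ :=
    funext fun i => (inv_mul_cancel_right₀ (hf₀0 i) _).symm
  refine hwf ▸ hI.mul_mem hσ (fun i => ?_) hf₀
  have hf₀i : lOrd (f₀ i) = (f₀ i).order := by simp [lOrd, hf₀0 i]
  rw [← WithTop.add_le_add_iff_right (WithTop.coe_ne_top (a := (f₀ i).order)), ← hf₀i,
    ← lOrd_mul, ← Pi.mul_apply, ← hwf, hf₀i]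
  exact_mod_cast hw i

lemma exists_forall_le_lOrd (hI : D.IsFracIdeal I) :
    ∃ m : Fin r → ℤ, ∀ f ∈ I, ∀ i, (m i : WithTop ℤ) ≤ lOrd (f i) := by
  obtain ⟨⟨B, rfl⟩, -⟩ := hI
  have hbound (i : Fin r) : ∃ m : ℤ, (m : WithTop ℤ) ≤ B.inf fun b => lOrd (b i) := by
    induction B.inf fun b => lOrd (b i) using WithTop.recTopCoe with
    | top => exact ⟨0, le_top⟩
    | coe a => exact ⟨a, le_rfl⟩
  choose m hm using hbound
  refine ⟨m, ?_⟩
  rintro _ ⟨a, ha, rfl⟩ i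
  rw [Finset.sum_apply, lOrd_eq_addVal]
  refine AddValuation.map_le_sum _ fun b hb => ?_
  rw [← lOrd_eq_addVal, Pi.mul_apply, lOrd_mul]
  exact (hm i).trans <| (Finset.inf_le hb).trans <|
    le_add_of_nonneg_left (D.lOrd_nonneg_of_mem_O (ha b hb) i)

end CurveData.IsFracIdeal

lemma finite_setOf_coe_le_and_lt_or_eq_top (m γ : ℤ) :
    {u : WithTop ℤ | (m : WithTop ℤ) ≤ u ∧ (u < γ ∨ u = ⊤)}.Finite := by
  refine (((Set.finite_Icc m γ).image (↑)).insert ⊤).subset ?_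
  rintro u ⟨hmu, hu | rfl⟩
  · induction u using WithTop.recTopCoe with
    | top => simp at hu
    | coe u => exact Or.inr ⟨u, ⟨by exact_mod_cast hmu, by exact_mod_cast hu.le⟩, rfl⟩
  · exact Or.inl rfl

lemma exists_finset_vv_eq_of_lOrd_lt {I : Set (Fin r → LaurentSeries K)} (m γ : Fin r → ℤ)
    (hm : ∀ f ∈ I, ∀ i, (m i : WithTop ℤ) ≤ lOrd (f i)) :
    ∃ H : Finset (Fin r → LaurentSeries K), ↑H ⊆ I \ {0} ∧
      ∀ f ∈ I, f ≠ 0 → (∀ i, f i ≠ 0 → lOrd (f i) < γ i) →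
        ∃ h ∈ H, vv h = vv f := by
  set S := {f ∈ I \ {0} | ∀ i, f i ≠ 0 → lOrd (f i) < γ i}
  have hfin : (vv '' S).Finite := by
    refine (Set.Finite.pi' fun i => finite_setOf_coe_le_and_lt_or_eq_top (m i) (γ i)).subset ?_
    rintro _ ⟨f, ⟨⟨hfI, -⟩, hf⟩, rfl⟩ i
    refine ⟨hm f hfI i, ?_⟩
    by_cases hfi : f i = 0
    · exact Or.inr (lOrd_eq_top_iff.mpr hfi)
    · exact Or.inl (hf i hfi)
  obtain ⟨T, hTS, hT, hvv⟩ :=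
    Set.exists_subset_image_finite_and.mp ⟨_, subset_rfl, hfin, rfl⟩
  refine ⟨hT.toFinset, by simpa using hTS.trans (Set.sep_subset _ _), fun f hfI hf0 hf => ?_⟩
  have hfT : vv f ∈ vv '' T := hvv ▸ ⟨f, ⟨⟨hfI, hf0⟩, hf⟩, rfl⟩
  obtain ⟨h, hhT, hh⟩ := hfT
  exact ⟨h, hT.mem_toFinset.mpr hhT, hh⟩

theorem statement6_general {K : Type*} [Field K] {r n : ℕ}
    (D : CurveData K r n) (σc : Fin r → ℕ)
    (hσc : ∀ h : Fin r → LaurentSeries K,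
      (∀ i, ((σc i : ℤ) : WithTop ℤ) ≤ lOrd (h i)) → h ∈ D.O)
    (I : Set (Fin r → LaurentSeries K)) (hI : D.IsFracIdeal I) :
    ∃ G H : Finset (Fin r → LaurentSeries K), IsSB D G H I := by
  classical
  have hσ : IsConductorBound D.O fun i => (σc i : ℤ) := hσc
  have hσM : IsConductorBound D.Mset fun i => ((σc i + 1 : ℕ) : ℤ) :=
    hσ.mset (fun i => by simp) (fun i => by positivity)
  obtain ⟨γ, hγ⟩ := hI.exists_isConductorBound hσ
  obtain ⟨m, hm⟩ := hI.exists_forall_le_lOrd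
  obtain ⟨H₁, hH₁, hH₁vv⟩ := exists_finset_vv_eq_of_lOrd_lt m γ hm
  let G := Finset.univ.image fun k => branchMonomial K k (σc k + 1 : ℕ)
  let H₂ := branchMonomialBlock K (fun k => σc k + 1) γ
  refine ⟨G, H₁ ∪ H₂, ?_, ?_, fun f hf hf0 => ?_⟩
  · simpa [G, Set.subset_def] using fun k =>
      ⟨hσM.branchMonomial_mem le_rfl, branchMonomial_ne_zero k _⟩
  · simpa using Set.union_subset hH₁ (hγ.coe_branchMonomialBlock_subset _)
  by_cases hlarge : ∃ k, f k ≠ 0 ∧ (γ k : WithTop ℤ) ≤ lOrd (f k)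
  · obtain ⟨k, hfk, hγk⟩ := hlarge
    obtain ⟨f', hf'⟩ := exists_isKRed_of_branchMonomial_mem (H := H₁ ∪ H₂) (b := σc k + 1)
      (Nat.succ_pos _)
      (Finset.mem_image_of_mem (fun k => branchMonomial K k (σc k + 1 : ℕ)) (Finset.mem_univ k))
      (fun _ hs => Finset.mem_union_right _ (branchMonomial_mem_branchMonomialBlock hs)) hfk hγk
    exact ⟨f', k, hf'⟩
  · push Not at hlarge
    obtain ⟨k, hfk⟩ := Function.ne_iff.mp hf0
    obtain ⟨h, hh, hvv⟩ := hH₁vv f hf hf0 hlarge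
    obtain ⟨f', hf'⟩ := exists_isKRed_of_vv_eq (G := G) (Finset.mem_union_left H₂ hh) hvv hfk
    exact ⟨f', k, hf'⟩

/-- Theorem 3.5: existence of Standard Bases. Every fractional
ideal `I` of the local ring `O` of an algebroid curve admits a Standard Basis:
finite sets `G ⊆ M \ {0}` and `H ⊆ I \ {0}` such that every nonzero element of
`I` admits a reduction modulo `(H, G)`. -/
theorem statement6 {K : Type*} [Field K] [IsAlgClosed K] {r n : ℕ} (hr : 1 ≤ r)
    (D : CurveData K r n) (σc : Fin r → ℕ)
    (hσc : ∀ h : Fin r → LaurentSeries K,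
      (∀ i, ((σc i : ℤ) : WithTop ℤ) ≤ lOrd (h i)) → h ∈ D.O)
    (I : Set (Fin r → LaurentSeries K)) (hI : D.IsFracIdeal I) :
    ∃ G H : Finset (Fin r → LaurentSeries K), IsSB D G H I :=
  statement6_general D σc hσc I hI
end
end
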